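/- arXiv:2209.11491 — 5 statements merged into one kernel-verified Lean document; each statement's English description precedes it below -/
import Mathlib

section
/- Let f_1,…,f_n : [0,∞) → ℝ be bounded continuous functions and define u(x,i) := Σ_{k=1}^n 2p_k ∫₀^∞ g_r((x,i),(y,k)) f_k(y) dy. Then for each leg i the function x ↦ u(x,i) is twice continuously differentiable on (0,∞) and satisfies the resolvent equation (1/2)·∂²u/∂x²(x,i) − r·u(x,i) = −f_i(x) for all x > 0. -/
/-!
The spider Green function splits as `θ⁻¹ e^{-θx} e^{-θy}` plus, when `x` and `y` lie on the same
leg `i`, `p_i⁻¹` times the Green function of Brownian motion on `[0, ∞)` killed at the origin.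
Hence on leg `i` the resolvent is `a e^{-θx} + R f_i`, where `e^{-θx}` solves `u'' = θ² u` and
`R f = (2/θ) (e^{-θx} ∫₀ˣ sinh(θy) f(y) dy + sinh(θx) ∫ₓ^∞ e^{-θy} f(y) dy)` is the killed
resolvent. Differentiating `R f` twice with the fundamental theorem of calculus, the boundary
terms combine through `e^{-θx} (sinh θx + cosh θx) = 1` into `(R f)'' = θ² R f - 2 f`; with
`θ² = 2r` this is the resolvent equation.
-/

open Filter MeasureTheory Real Set

/-- Green function of the Brownian spider with `n` legs, weights `p`, and `θ = √(2r)`. -/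
noncomputable def spiderGreen (n : ℕ) (p : Fin n → ℝ) (θ : ℝ)
    (x : ℝ) (i : Fin n) (y : ℝ) (j : Fin n) : ℝ :=
  if i = j then
    (1/θ) * Real.exp (-θ * max x y) *
      ((1 / p i) * Real.sinh (θ * min x y) + Real.exp (-θ * min x y))
  else (1/θ) * Real.exp (-θ * x) * Real.exp (-θ * y)

lemma hasDerivAt_exp_neg_mul (θ x : ℝ) :
    HasDerivAt (fun t => exp (-θ * t)) (-θ * exp (-θ * x)) x := by
  simpa [mul_comm] using ((hasDerivAt_id x).const_mul (-θ)).exp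

lemma hasDerivAt_sinh_mul (θ x : ℝ) :
    HasDerivAt (fun t => sinh (θ * t)) (θ * cosh (θ * x)) x := by
  simpa [mul_comm] using ((hasDerivAt_id x).const_mul θ).sinh

lemma hasDerivAt_cosh_mul (θ x : ℝ) :
    HasDerivAt (fun t => cosh (θ * t)) (θ * sinh (θ * x)) x := by
  simpa [mul_comm] using ((hasDerivAt_id x).const_mul θ).cosh

lemma exp_neg_mul_mul_sinh_add_cosh (θ x : ℝ) :
    exp (-θ * x) * (sinh (θ * x) + cosh (θ * x)) = 1 := by
  rw [sinh_add_cosh, ← exp_add]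
  simp

lemma integrableOn_exp_neg_mul_mul {θ a C : ℝ} {f : ℝ → ℝ} (hθ : 0 < θ)
    (hf : AEStronglyMeasurable f (volume.restrict (Ioi a))) (hC : ∀ y > a, |f y| ≤ C) :
    IntegrableOn (fun y => exp (-θ * y) * f y) (Ioi a) := by
  simp_rw [mul_comm (exp _)]
  refine (exp_neg_integrableOn_Ioi a hθ).bdd_mul (c := C) hf ?_
  filter_upwards [ae_restrict_mem measurableSet_Ioi] with y hy using hC y hy

lemma hasDerivAt_integral_Ioi {g : ℝ → ℝ} {a x : ℝ} (hg : IntegrableOn g (Ioi a))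
    (hx : a < x) (hgx : ContinuousAt g x) :
    HasDerivAt (fun t => ∫ y in Ioi t, g y) (-g x) x := by
  have hint : HasDerivAt (fun t => ∫ y in a..t, g y) (g x) x :=
    intervalIntegral.integral_hasDerivAt_right
      ((intervalIntegrable_iff_integrableOn_Ioc_of_le hx.le).2 (hg.mono_set Ioc_subset_Ioi_self))
      ⟨Ioi a, Ioi_mem_nhds hx, hg.aestronglyMeasurable⟩ hgx
  refine (hint.const_sub (∫ y in Ioi a, g y)).congr_of_eventuallyEq ?_
  filter_upwards [Ioi_mem_nhds hx] with t ht
  rw [← intervalIntegral.integral_Ioi_sub_Ioi hg ht.le, sub_sub_cancel]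

lemma hasDerivAt_integral_of_continuousOn_Ici {g : ℝ → ℝ} {a x : ℝ}
    (hg : ContinuousOn g (Ici a)) (hx : a < x) :
    HasDerivAt (fun t => ∫ y in a..t, g y) (g x) x :=
  intervalIntegral.integral_hasDerivAt_right
    (hg.mono (by simp [uIcc_of_le hx.le, Icc_subset_Ici_self])).intervalIntegrable
    ((hg.mono Ioi_subset_Ici_self).stronglyMeasurableAtFilter isOpen_Ioi x hx)
    (hg.continuousAt (Ici_mem_nhds hx))

/-- Green function of Brownian motion on `[0, ∞)` killed at `0`, with respect to the speed
measure `2 dy`. -/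
noncomputable def killedGreen (θ x y : ℝ) : ℝ :=
  (1 / θ) * exp (-θ * max x y) * sinh (θ * min x y)

noncomputable def killedResolvent (θ : ℝ) (f : ℝ → ℝ) (x : ℝ) : ℝ :=
  2 * ∫ y in Ioi 0, killedGreen θ x y * f y

section KilledGreen

variable {θ x y : ℝ} {f : ℝ → ℝ}

lemma killedGreen_of_le (h : y ≤ x) :
    killedGreen θ x y = (1 / θ) * exp (-θ * x) * sinh (θ * y) := by
  rw [killedGreen, max_eq_left h, min_eq_right h]

lemma killedGreen_of_ge (h : x ≤ y) :
    killedGreen θ x y = (1 / θ) * sinh (θ * x) * exp (-θ * y) := by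
  rw [killedGreen, max_eq_right h, min_eq_left h, mul_right_comm]

lemma continuous_killedGreen (θ x : ℝ) : Continuous (killedGreen θ x) := by
  unfold killedGreen
  fun_prop

lemma integrableOn_killedGreen_mul_Ioc (hf : ContinuousOn f (Ici 0)) :
    IntegrableOn (fun y => killedGreen θ x y * f y) (Ioc 0 x) :=
  (((continuous_killedGreen θ x).continuousOn.mul
    (hf.mono Icc_subset_Ici_self)).integrableOn_compact isCompact_Icc).mono_set
      Ioc_subset_Icc_self

lemma integrableOn_killedGreen_mul_Ioi (hx : 0 ≤ x)
    (hfi : IntegrableOn (fun y => exp (-θ * y) * f y) (Ioi 0)) :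
    IntegrableOn (fun y => killedGreen θ x y * f y) (Ioi x) := by
  refine IntegrableOn.congr_fun
    ((hfi.mono_set (Ioi_subset_Ioi hx)).const_mul ((1 / θ) * sinh (θ * x)))
    (fun y hy => ?_) measurableSet_Ioi
  simp only [killedGreen_of_ge (le_of_lt hy), mul_assoc]

lemma integrableOn_killedGreen_mul (hx : 0 ≤ x) (hf : ContinuousOn f (Ici 0))
    (hfi : IntegrableOn (fun y => exp (-θ * y) * f y) (Ioi 0)) :
    IntegrableOn (fun y => killedGreen θ x y * f y) (Ioi 0) :=
  Ioc_union_Ioi_eq_Ioi hx ▸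
    (integrableOn_killedGreen_mul_Ioc hf).union (integrableOn_killedGreen_mul_Ioi hx hfi)

lemma killedResolvent_eq (hx : 0 ≤ x) (hf : ContinuousOn f (Ici 0))
    (hfi : IntegrableOn (fun y => exp (-θ * y) * f y) (Ioi 0)) :
    killedResolvent θ f x = (2 / θ) * (exp (-θ * x) * (∫ y in 0..x, sinh (θ * y) * f y) +
      sinh (θ * x) * ∫ y in Ioi x, exp (-θ * y) * f y) := by
  rw [killedResolvent, ← Ioc_union_Ioi_eq_Ioi hx,
    setIntegral_union (Ioc_disjoint_Ioi le_rfl) measurableSet_Ioi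
      (integrableOn_killedGreen_mul_Ioc hf) (integrableOn_killedGreen_mul_Ioi hx hfi),
    setIntegral_congr_fun measurableSet_Ioc
      (g := fun y => (1 / θ) * exp (-θ * x) * (sinh (θ * y) * f y))
      (fun y hy => by simp only [killedGreen_of_le hy.2, mul_assoc]),
    setIntegral_congr_fun measurableSet_Ioi
      (g := fun y => (1 / θ) * sinh (θ * x) * (exp (-θ * y) * f y))
      (fun y hy => by simp only [killedGreen_of_ge (le_of_lt hy), mul_assoc]),
    integral_const_mul, integral_const_mul, intervalIntegral.integral_of_le hx]
  ring

theorem exists_hasDerivAt_killedResolvent (hθ : θ ≠ 0) (hf : ContinuousOn f (Ici 0))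
    (hfi : IntegrableOn (fun y => exp (-θ * y) * f y) (Ioi 0)) :
    ∃ R' : ℝ → ℝ, (∀ x > 0, HasDerivAt (killedResolvent θ f) (R' x) x) ∧
      ∀ x > 0, HasDerivAt R' (θ ^ 2 * killedResolvent θ f x - 2 * f x) x := by
  set F := fun t => ∫ y in 0..t, sinh (θ * y) * f y
  set H := fun t => ∫ y in Ioi t, exp (-θ * y) * f y
  have hF : ∀ x > 0, HasDerivAt F (sinh (θ * x) * f x) x := fun x hx =>
    hasDerivAt_integral_of_continuousOn_Ici
      ((continuous_sinh.comp (continuous_const_mul θ)).continuousOn.mul hf) hx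
  have hH : ∀ x > 0, HasDerivAt H (-(exp (-θ * x) * f x)) x := fun x hx =>
    hasDerivAt_integral_Ioi hfi hx
      ((by fun_prop : Continuous fun y => exp (-θ * y)).continuousAt.mul
        (hf.continuousAt (Ici_mem_nhds hx)))
  refine ⟨fun t => 2 * (cosh (θ * t) * H t - exp (-θ * t) * F t),
    fun x hx => ?_, fun x hx => ?_⟩
  · have hR := (((hasDerivAt_exp_neg_mul θ x).mul (hF x hx)).add
      ((hasDerivAt_sinh_mul θ x).mul (hH x hx))).const_mul (2 / θ)
    refine (hR.congr_of_eventuallyEq ?_).congr_deriv ?_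
    · filter_upwards [Ioi_mem_nhds hx] with t ht using killedResolvent_eq ht.le hf hfi
    · field_simp
      ring
  · have hR' := (((hasDerivAt_cosh_mul θ x).mul (hH x hx)).sub
      ((hasDerivAt_exp_neg_mul θ x).mul (hF x hx))).const_mul 2
    refine hR'.congr_deriv ?_
    have hθ2 : θ ^ 2 * (2 / θ) = 2 * θ := by field_simp
    rw [killedResolvent_eq hx.le hf hfi]
    change _ = θ ^ 2 * (2 / θ * (exp (-θ * x) * F x + sinh (θ * x) * H x)) - 2 * f x
    linear_combination (-2 * f x) * exp_neg_mul_mul_sinh_add_cosh θ x -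
      (exp (-θ * x) * F x + sinh (θ * x) * H x) * hθ2

end KilledGreen

lemma spiderGreen_eq (n : ℕ) (p : Fin n → ℝ) (θ x : ℝ) (i : Fin n) (y : ℝ) (k : Fin n) :
    spiderGreen n p θ x i y k =
      (1 / θ) * exp (-θ * x) * exp (-θ * y) + if i = k then killedGreen θ x y / p i else 0 := by
  have hexp : exp (-θ * max x y) * exp (-θ * min x y) = exp (-θ * x) * exp (-θ * y) := by
    rw [← exp_add, ← exp_add, ← mul_add, ← mul_add, max_add_min]
  unfold spiderGreen killedGreen
  split_ifs
  · linear_combination (1 / θ) * hexp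
  · ring

section Spider

variable {n : ℕ} {p : Fin n → ℝ} {θ x : ℝ} {i : Fin n}

lemma integral_spiderGreen_mul {g : ℝ → ℝ} (k : Fin n) (hx : 0 ≤ x)
    (hg : ContinuousOn g (Ici 0)) (hgi : IntegrableOn (fun y => exp (-θ * y) * g y) (Ioi 0)) :
    ∫ y in Ioi 0, spiderGreen n p θ x i y k * g y =
      (1 / θ) * exp (-θ * x) * (∫ y in Ioi 0, exp (-θ * y) * g y) +
        if i = k then killedResolvent θ g x / (2 * p i) else 0 := by
  have hexp : ∫ y in Ioi 0, (1 / θ) * exp (-θ * x) * exp (-θ * y) * g y =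
      (1 / θ) * exp (-θ * x) * ∫ y in Ioi 0, exp (-θ * y) * g y := by
    simp only [mul_assoc, integral_const_mul]
  by_cases hik : i = k
  · have hint : IntegrableOn (fun y => (1 / θ) * exp (-θ * x) * exp (-θ * y) * g y) (Ioi 0) :=
      IntegrableOn.congr_fun (hgi.const_mul ((1 / θ) * exp (-θ * x))) (fun y _ => by ring)
        measurableSet_Ioi
    have hkilled : IntegrableOn (fun y => killedGreen θ x y / p k * g y) (Ioi 0) :=
      IntegrableOn.congr_fun ((integrableOn_killedGreen_mul hx hg hgi).div_const (p k))
        (fun y _ => div_mul_eq_mul_div _ _ _ |>.symm) measurableSet_Ioi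
    simp only [spiderGreen_eq, hik, if_true, add_mul]
    rw [integral_add hint hkilled, hexp]
    simp only [div_mul_eq_mul_div, integral_div]
    rw [killedResolvent, mul_div_mul_left _ _ two_ne_zero]
  · simp only [spiderGreen_eq, hik, if_false, add_zero, hexp]

lemma sum_integral_spiderGreen_mul {f : Fin n → ℝ → ℝ} (hpi : p i ≠ 0) (hx : 0 ≤ x)
    (hf : ∀ k, ContinuousOn (f k) (Ici 0))
    (hfi : ∀ k, IntegrableOn (fun y => exp (-θ * y) * f k y) (Ioi 0)) :
    ∑ k, 2 * p k * ∫ y in Ioi 0, spiderGreen n p θ x i y k * f k y =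
      (2 / θ) * (∑ k, p k * ∫ y in Ioi 0, exp (-θ * y) * f k y) * exp (-θ * x) +
        killedResolvent θ (f i) x := by
  simp only [integral_spiderGreen_mul _ hx (hf _) (hfi _), mul_add, Finset.sum_add_distrib,
    mul_ite, mul_zero, Finset.sum_ite_eq, Finset.mem_univ, if_true, Finset.mul_sum,
    Finset.sum_mul]
  congr 1
  · exact Finset.sum_congr rfl fun k _ => by ring
  · field_simp

end Spider

theorem stmt_4_general (n : ℕ) (p : Fin n → ℝ)
    (hp : ∀ k, 0 < p k)
    (r : ℝ) (hr : 0 < r) (θ : ℝ) (hθ : θ = Real.sqrt (2 * r))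
    (f : Fin n → ℝ → ℝ)
    (hf_cont : ∀ k, ContinuousOn (f k) (Set.Ici 0))
    (hf_bdd : ∀ k, ∃ C, ∀ y ≥ (0:ℝ), |f k y| ≤ C)
    (u : ℝ → Fin n → ℝ)
    (hu : ∀ x i, u x i =
      ∑ k, 2 * p k * ∫ y in Set.Ioi (0:ℝ), spiderGreen n p θ x i y k * f k y)
    (i : Fin n) :
    ∃ u' u'' : ℝ → ℝ,
      (∀ x > (0:ℝ), HasDerivAt (fun t => u t i) (u' x) x) ∧
      (∀ x > (0:ℝ), HasDerivAt u' (u'' x) x) ∧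
      ContinuousOn u'' (Set.Ioi 0) ∧
      (∀ x > (0:ℝ), (1/2) * u'' x - r * u x i = -f i x) := by
  have hθ_pos : 0 < θ := hθ ▸ Real.sqrt_pos.mpr (by linarith)
  have hθ_sq : θ ^ 2 = 2 * r := hθ ▸ Real.sq_sqrt (by linarith)
  have hfi : ∀ k, IntegrableOn (fun y => exp (-θ * y) * f k y) (Ioi 0) := fun k =>
    have ⟨C, hC⟩ := hf_bdd k
    integrableOn_exp_neg_mul_mul hθ_pos
      (((hf_cont k).mono Ioi_subset_Ici_self).aestronglyMeasurable measurableSet_Ioi)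
      fun y hy => hC y hy.le
  set a := (2 / θ) * ∑ k, p k * ∫ y in Ioi 0, exp (-θ * y) * f k y
  have hu_eq : ∀ x > 0, u x i = a * exp (-θ * x) + killedResolvent θ (f i) x := fun x hx => by
    rw [hu, sum_integral_spiderGreen_mul (hp i).ne' hx.le hf_cont hfi]
  obtain ⟨R', hR, hR'⟩ := exists_hasDerivAt_killedResolvent hθ_pos.ne' (hf_cont i) (hfi i)
  have hu' : ∀ x > 0, HasDerivAt (fun t => u t i) (a * (-θ * exp (-θ * x)) + R' x) x :=
    fun x hx => (((hasDerivAt_exp_neg_mul θ x).const_mul a).add (hR x hx)).congr_of_eventuallyEq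
      (eventually_of_mem (Ioi_mem_nhds hx) hu_eq)
  refine ⟨fun x => a * (-θ * exp (-θ * x)) + R' x, fun x => θ ^ 2 * u x i - 2 * f i x,
    hu', fun x hx => ?_, ?_, fun x hx => ?_⟩
  · refine ((((hasDerivAt_exp_neg_mul θ x).const_mul (-θ)).const_mul a).add
      (hR' x hx)).congr_deriv ?_
    beta_reduce
    rw [hu_eq x hx]
    ring
  · exact (continuousOn_const.mul fun x hx => (hu' x hx).continuousAt.continuousWithinAt).sub
      (continuousOn_const.mul ((hf_cont i).mono Ioi_subset_Ici_self))
  · beta_reduce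
    rw [hθ_sq]
    ring

/-- the resolvent `u` of the Brownian spider applied to bounded continuous
functions is twice continuously differentiable on each leg and satisfies
`(1/2)u'' − r·u = −f_i` there. -/
theorem stmt_4 (n : ℕ) (hn : 1 ≤ n) (p : Fin n → ℝ)
    (hp : ∀ k, 0 < p k) (hpsum : ∑ k, p k = 1)
    (r : ℝ) (hr : 0 < r) (θ : ℝ) (hθ : θ = Real.sqrt (2 * r))
    (f : Fin n → ℝ → ℝ)
    (hf_cont : ∀ k, ContinuousOn (f k) (Set.Ici 0))
    (hf_bdd : ∀ k, ∃ C, ∀ y ≥ (0:ℝ), |f k y| ≤ C)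
    (u : ℝ → Fin n → ℝ)
    (hu : ∀ x i, u x i =
      ∑ k, 2 * p k * ∫ y in Set.Ioi (0:ℝ), spiderGreen n p θ x i y k * f k y)
    (i : Fin n) :
    ∃ u' u'' : ℝ → ℝ,
      (∀ x > (0:ℝ), HasDerivAt (fun t => u t i) (u' x) x) ∧
      (∀ x > (0:ℝ), HasDerivAt u' (u'' x) x) ∧
      ContinuousOn u'' (Set.Ioi 0) ∧
      (∀ x > (0:ℝ), (1/2) * u'' x - r * u x i = -f i x) :=
  stmt_4_general n p hp r hr θ hθ f hf_cont hf_bdd u hu i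
end

section
/- Let f be the function represented by a representing datum (σ_1,…,σ_n, a_1,…,a_n, s₀). Then for every leg i the right derivative f⁺(0,i) exists and equals (θ/p_i)·(σ_i((0,∞)) + a_i) − θ, and consequently Σ_{i=1}^n p_i · f⁺(0,i) = −θ·s₀ ≤ 0. -/
/-!
Both kernels equal `e^{-θx}` off leg `i`, and on leg `i` they equal `e^{-θx}` plus `1/p_i` times
`sinh (θx)` (at `∞`) or `legKernel θ x y`, which is `sinh (θx)` for `x ≤ y` and lies in
`[0, sinh (θx)]` always. Using the normalization, `f x i = e^{-θx} + (∫ legKernel θ x · dσ_i +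
a_i sinh (θx)) / p_i`, so `f 0 i = 1`. Dividing by `x` and letting `x ↓ 0`, dominated convergence
gives `∫ legKernel θ x · dσ_i / x → θ σ_i((0,∞))`, whence the right derivative; the sum identity is
then the normalization again.
-/

open Filter Topology MeasureTheory

/-- Martin kernel of the Brownian spider normalized at the origin, for poles `(y,k)` with
`y > 0`. -/
noncomputable def martinKernel0 (n : ℕ) (p : Fin n → ℝ) (θ : ℝ)
    (x : ℝ) (i : Fin n) (y : ℝ) (k : Fin n) : ℝ :=
  if i = k then
    (if x ≤ y then (1 / p i) * Real.sinh (θ * x) + Real.exp (-θ * x)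
     else Real.exp (-θ * x) * (1 + (1 / p i) * Real.exp (θ * y) * Real.sinh (θ * y)))
  else Real.exp (-θ * x)

/-- Boundary Martin kernel of the Brownian spider normalized at the origin, for boundary
points `(∞,k)`. -/
noncomputable def martinKernel0Inf (n : ℕ) (p : Fin n → ℝ) (θ : ℝ)
    (x : ℝ) (i k : Fin n) : ℝ :=
  if i = k then (1 / p i) * Real.sinh (θ * x) + Real.exp (-θ * x)
  else Real.exp (-θ * x)

open Real Set

noncomputable def legKernel (θ x y : ℝ) : ℝ :=
  if x ≤ y then sinh (θ * x) else exp (-θ * x) * exp (θ * y) * sinh (θ * y)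

section legKernel

variable {θ x y : ℝ}

lemma legKernel_of_le (h : x ≤ y) : legKernel θ x y = sinh (θ * x) := if_pos h

lemma legKernel_zero_left (hy : 0 ≤ y) : legKernel θ 0 y = 0 := by
  rw [legKernel_of_le hy, mul_zero, sinh_zero]

lemma legKernel_nonneg (hθ : 0 ≤ θ) (hx : 0 ≤ x) (hy : 0 ≤ y) : 0 ≤ legKernel θ x y := by
  unfold legKernel
  split_ifs
  · exact sinh_nonneg_iff.2 (mul_nonneg hθ hx)
  · exact mul_nonneg (by positivity) (sinh_nonneg_iff.2 (mul_nonneg hθ hy))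

lemma legKernel_le_sinh (hθ : 0 ≤ θ) (hy : 0 ≤ y) : legKernel θ x y ≤ sinh (θ * x) := by
  unfold legKernel
  split_ifs with hxy
  · exact le_rfl
  · have hyx : y ≤ x := (lt_of_not_ge hxy).le
    have hexp : exp (-θ * x) * exp (θ * y) ≤ 1 := by
      rw [← exp_add, exp_le_one_iff]; nlinarith
    have hsinh : sinh (θ * y) ≤ sinh (θ * x) := sinh_le_sinh.2 (by nlinarith)
    calc exp (-θ * x) * exp (θ * y) * sinh (θ * y) ≤ 1 * sinh (θ * y) :=
          mul_le_mul_of_nonneg_right hexp (sinh_nonneg_iff.2 (mul_nonneg hθ hy))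
      _ ≤ sinh (θ * x) := by rwa [one_mul]

lemma measurable_legKernel : Measurable (legKernel θ x) :=
  Measurable.ite measurableSet_Ici measurable_const (by fun_prop)

lemma integrableOn_legKernel {μ : Measure ℝ} [IsFiniteMeasure μ] (hθ : 0 ≤ θ) (hx : 0 ≤ x) :
    IntegrableOn (legKernel θ x) (Ioi 0) μ := by
  refine (integrable_const (sinh (θ * x))).mono' measurable_legKernel.aestronglyMeasurable ?_
  refine (ae_restrict_iff' measurableSet_Ioi).2 (ae_of_all _ fun y (hy : 0 < y) => ?_)
  rw [norm_of_nonneg (legKernel_nonneg hθ hx hy.le)]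
  exact legKernel_le_sinh hθ hy.le

end legKernel

lemma martinKernel0_eq (n : ℕ) (p : Fin n → ℝ) (θ x : ℝ) (i : Fin n) (y : ℝ) (k : Fin n) :
    martinKernel0 n p θ x i y k = exp (-θ * x) + if i = k then legKernel θ x y / p i else 0 := by
  unfold martinKernel0 legKernel
  split_ifs <;> ring

lemma martinKernel0Inf_eq (n : ℕ) (p : Fin n → ℝ) (θ x : ℝ) (i k : Fin n) :
    martinKernel0Inf n p θ x i k = exp (-θ * x) + if i = k then sinh (θ * x) / p i else 0 := by
  unfold martinKernel0Inf
  split_ifs <;> ring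

lemma tendsto_sinh_mul_div (θ : ℝ) : Tendsto (fun x => sinh (θ * x) / x) (𝓝[>] 0) (𝓝 θ) := by
  simpa [div_eq_inv_mul] using
    ((hasDerivAt_id (0 : ℝ)).const_mul θ).sinh.tendsto_slope_zero_right

lemma tendsto_exp_neg_mul_sub_one_div (θ : ℝ) :
    Tendsto (fun x => (exp (-θ * x) - 1) / x) (𝓝[>] 0) (𝓝 (-θ)) := by
  simpa [div_eq_inv_mul] using
    ((hasDerivAt_id (0 : ℝ)).const_mul (-θ)).exp.tendsto_slope_zero_right

lemma tendsto_setIntegral_legKernel_div {μ : Measure ℝ} [IsFiniteMeasure μ] {θ : ℝ}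
    (hθ : 0 ≤ θ) :
    Tendsto (fun x => (∫ y in Ioi 0, legKernel θ x y ∂μ) / x) (𝓝[>] 0)
      (𝓝 (θ * μ.real (Ioi 0))) := by
  have hbound : ∀ᶠ x in 𝓝[>] (0 : ℝ), sinh (θ * x) / x < θ + 1 :=
    (tendsto_sinh_mul_div θ).eventually (Iio_mem_nhds (lt_add_one θ))
  have hlim : θ * μ.real (Ioi 0) = ∫ _ in Ioi 0, θ ∂μ := by
    rw [setIntegral_const, smul_eq_mul, mul_comm]
  simp_rw [← integral_div, hlim]
  refine tendsto_integral_filter_of_dominated_convergence (fun _ => θ + 1)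
    (Eventually.of_forall fun x => (measurable_legKernel.div_const x).aestronglyMeasurable)
    ?_ (integrable_const _) ?_
  · filter_upwards [hbound, self_mem_nhdsWithin] with x hx (hx0 : 0 < x)
    refine (ae_restrict_iff' measurableSet_Ioi).2 (ae_of_all _ fun y (hy : 0 < y) => ?_)
    rw [norm_of_nonneg (div_nonneg (legKernel_nonneg hθ hx0.le hy.le) hx0.le)]
    exact (div_le_div_of_nonneg_right (legKernel_le_sinh hθ hy.le) hx0.le).trans hx.le
  · refine (ae_restrict_iff' measurableSet_Ioi).2 (ae_of_all _ fun y (hy : 0 < y) => ?_)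
    refine (tendsto_sinh_mul_div θ).congr' ?_
    filter_upwards [nhdsWithin_le_nhds (Iic_mem_nhds hy)] with x (hxy : x ≤ y)
    rw [legKernel_of_le hxy]

lemma setIntegral_martinKernel0_add {n : ℕ} {p : Fin n → ℝ} {θ x : ℝ} (hθ : 0 ≤ θ)
    (hx : 0 ≤ x) (μ : Measure ℝ) [IsFiniteMeasure μ] (c : ℝ) (i k : Fin n) :
    (∫ y in Ioi 0, martinKernel0 n p θ x i y k ∂μ) + c * martinKernel0Inf n p θ x i k =
      exp (-θ * x) * ((μ (Ioi 0)).toReal + c) +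
        if i = k then ((∫ y in Ioi 0, legKernel θ x y ∂μ) + c * sinh (θ * x)) / p i else 0 := by
  simp_rw [martinKernel0_eq, martinKernel0Inf_eq]
  by_cases hik : i = k
  · simp only [hik, if_true]
    rw [integral_add (integrable_const _)
      ((integrableOn_legKernel hθ hx).div_const _), setIntegral_const, integral_div,
      measureReal_def, smul_eq_mul]
    ring
  · simp only [hik, if_false, add_zero, setIntegral_const, measureReal_def, smul_eq_mul]
    ring

lemma sum_setIntegral_martinKernel0_eq {n : ℕ} {p : Fin n → ℝ} {θ x : ℝ} (hθ : 0 ≤ θ)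
    (hx : 0 ≤ x) (σ : Fin n → Measure ℝ) [∀ k, IsFiniteMeasure (σ k)] (a : Fin n → ℝ) {s₀ : ℝ}
    (hnorm : s₀ + ∑ k, ((σ k (Ioi 0)).toReal + a k) = 1) (i : Fin n) :
    s₀ * exp (-θ * x) + ∑ k, ((∫ y in Ioi 0, martinKernel0 n p θ x i y k ∂σ k) +
        a k * martinKernel0Inf n p θ x i k) =
      exp (-θ * x) + ((∫ y in Ioi 0, legKernel θ x y ∂σ i) + a i * sinh (θ * x)) / p i := by
  simp_rw [setIntegral_martinKernel0_add hθ hx, Finset.sum_add_distrib, ← Finset.mul_sum,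
    Finset.sum_ite_eq, Finset.mem_univ, if_true]
  linear_combination exp (-θ * x) * hnorm

theorem stmt_8_general (n : ℕ) (p : Fin n → ℝ)
    (hp : ∀ i, 0 < p i) (hpsum : ∑ i, p i = 1)
    (r : ℝ) (θ : ℝ) (hθ : θ = Real.sqrt (2 * r))
    (σ : Fin n → Measure ℝ) [∀ k, IsFiniteMeasure (σ k)]
    (a : Fin n → ℝ) (s₀ : ℝ) (hs₀ : 0 ≤ s₀)
    (hnorm : s₀ + ∑ k, ((σ k (Set.Ioi 0)).toReal + a k) = 1)
    (f : ℝ → Fin n → ℝ)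
    (hf : ∀ x i, f x i = s₀ * Real.exp (-θ * x) +
      ∑ k, ((∫ y in Set.Ioi (0:ℝ), martinKernel0 n p θ x i y k ∂(σ k)) +
        a k * martinKernel0Inf n p θ x i k)) :
    (∀ i, Tendsto (fun δ => (f δ i - f 0 i) / δ) (𝓝[>] 0)
      (𝓝 ((θ / p i) * ((σ i (Set.Ioi 0)).toReal + a i) - θ))) ∧
    ∑ i, p i * ((θ / p i) * ((σ i (Set.Ioi 0)).toReal + a i) - θ) = -θ * s₀ ∧
    -θ * s₀ ≤ 0 := by
  have hθ0 : 0 ≤ θ := hθ ▸ sqrt_nonneg _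
  have hrep : ∀ x, 0 ≤ x → ∀ i, f x i =
      exp (-θ * x) + ((∫ y in Ioi 0, legKernel θ x y ∂σ i) + a i * sinh (θ * x)) / p i :=
    fun x hx i => (hf x i).trans (sum_setIntegral_martinKernel0_eq hθ0 hx σ a hnorm i)
  refine ⟨fun i => ?_, ?_, ?_⟩
  · have hf0 : f 0 i = 1 := by
      rw [hrep 0 le_rfl, setIntegral_eq_zero_of_forall_eq_zero
        fun y (hy : y ∈ Ioi 0) => legKernel_zero_left (le_of_lt hy)]
      simp
    have hlim := (tendsto_exp_neg_mul_sub_one_div θ).add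
      (((tendsto_setIntegral_legKernel_div (μ := σ i) hθ0).add
        ((tendsto_sinh_mul_div θ).const_mul (a i))).div_const (p i))
    convert hlim.congr' ?_ using 2
    · rw [measureReal_def]; ring
    · filter_upwards [self_mem_nhdsWithin] with x (hx : 0 < x)
      rw [hrep x hx.le, hf0]
      ring
  · have hterm : ∀ i, p i * ((θ / p i) * ((σ i (Ioi 0)).toReal + a i) - θ) =
        θ * ((σ i (Ioi 0)).toReal + a i) - θ * p i := fun i => by
      field_simp [(hp i).ne']
    rw [Finset.sum_congr rfl fun i _ => hterm i, Finset.sum_sub_distrib, ← Finset.mul_sum,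
      ← Finset.mul_sum, hpsum]
    linear_combination θ * hnorm
  · rw [neg_mul]
    exact neg_nonpos.2 (mul_nonneg hθ0 hs₀)

/-- for a function `f` represented by a representing datum
`(σ_1,…,σ_n, a_1,…,a_n, s₀)`, the right derivative at the origin on leg `i` exists and
equals `(θ/p_i)(σ_i((0,∞)) + a_i) − θ`, whence `Σ p_i f⁺(0,i) = −θ·s₀ ≤ 0`. -/
theorem stmt_8 (n : ℕ) (hn : 1 ≤ n) (p : Fin n → ℝ)
    (hp : ∀ i, 0 < p i) (hpsum : ∑ i, p i = 1)
    (r : ℝ) (hr : 0 < r) (θ : ℝ) (hθ : θ = Real.sqrt (2 * r))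
    (σ : Fin n → Measure ℝ) [∀ k, IsFiniteMeasure (σ k)]
    (hσsupp : ∀ k, σ k (Set.Iic 0) = 0)
    (a : Fin n → ℝ) (ha : ∀ k, 0 ≤ a k) (s₀ : ℝ) (hs₀ : 0 ≤ s₀)
    (hnorm : s₀ + ∑ k, ((σ k (Set.Ioi 0)).toReal + a k) = 1)
    (f : ℝ → Fin n → ℝ)
    (hf : ∀ x i, f x i = s₀ * Real.exp (-θ * x) +
      ∑ k, ((∫ y in Set.Ioi (0:ℝ), martinKernel0 n p θ x i y k ∂(σ k)) +
        a k * martinKernel0Inf n p θ x i k)) :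
    (∀ i, Tendsto (fun δ => (f δ i - f 0 i) / δ) (𝓝[>] 0)
      (𝓝 ((θ / p i) * ((σ i (Set.Ioi 0)).toReal + a i) - θ))) ∧
    ∑ i, p i * ((θ / p i) * ((σ i (Set.Ioi 0)).toReal + a i) - θ) = -θ * s₀ ∧
    -θ * s₀ ≤ 0 :=
  stmt_8_general n p hp hpsum r θ hθ σ a s₀ hs₀ hnorm f hf
end

section
/- Let f be the function represented by a representing datum (σ_1,…,σ_n, a_1,…,a_n, s₀). Then for every x > 0 and every leg i both one-sided derivatives f⁺(x,i) and f⁻(x,i) exist and f⁺(x,i) − f⁻(x,i) = −(θ/p_i)·e^{θx}·σ_i({x}) ≤ 0; in particular f(·,i) is differentiable at x whenever σ_i has no atom at x. -/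
/-!
On its own leg the Martin kernel factors as `e^{-θx} · c (min x y)` with the profile
`c y = 1 + e^{θy} sinh (θy) / p_i`, and on the other legs (and for `s₀`) it is just `e^{-θx}`.
Hence `f (·, i) = e^{-θt} · H t` with `H t = const + a_i c t + ∫ c (min t y) dσ_i(y)`.
Since `c` is Lipschitz on half-lines `(-∞, b]`, one may differentiate under the integral on
either side of `x`: the right derivative of `t ↦ ∫ c (min t y) dσ_i` is `c' x · σ_i (x, ∞)`, the
left one `c' x · σ_i [x, ∞)`. The jump of `f` is therefore `-e^{-θx} c' x σ_i {x}`, and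
`c' x = (θ / p_i) e^{2θx}`.
-/

open Filter Topology MeasureTheory

open Set
open scoped NNReal

lemma HasDerivWithinAt.tendsto_slope_Ioi {F : ℝ → ℝ} {d x : ℝ}
    (h : HasDerivWithinAt F d (Ioi x) x) :
    Tendsto (fun δ => (F (x + δ) - F x) / δ) (𝓝[>] 0) (𝓝 d) := by
  have h' := (hasDerivWithinAt_iff_tendsto_slope' (s := Ioi x) (lt_irrefl x)).1 h
  rw [← add_zero x, ← map_add_left_nhdsGT, tendsto_map'_iff] at h'
  refine h'.congr fun δ => ?_
  simp [slope_def_field]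

lemma HasDerivWithinAt.tendsto_slope_Iio {F : ℝ → ℝ} {d x : ℝ}
    (h : HasDerivWithinAt F d (Iio x) x) :
    Tendsto (fun δ => (F x - F (x - δ)) / δ) (𝓝[>] 0) (𝓝 d) := by
  have h' := (hasDerivWithinAt_iff_tendsto_slope' (s := Iio x) (lt_irrefl x)).1 h
  rw [← sub_zero x, ← map_subLeft_nhdsGT, tendsto_map'_iff] at h'
  refine h'.congr fun δ => ?_
  simp only [Function.comp_apply, slope_def_field, sub_zero]
  rw [← neg_div_neg_eq, neg_sub, neg_sub, sub_sub_cancel]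

lemma HasDerivWithinAt.hasDerivAt_of_Iio_of_Ioi {F : ℝ → ℝ} {d x : ℝ}
    (hlt : HasDerivWithinAt F d (Iio x) x) (hgt : HasDerivWithinAt F d (Ioi x) x) :
    HasDerivAt F d x := by
  have h := (hasDerivWithinAt_Iio_iff_Iic.1 hlt).union (hasDerivWithinAt_Ioi_iff_Ici.1 hgt)
  rwa [Iic_union_Ici, hasDerivWithinAt_univ] at h

section IntegralCompMin

variable {μ : Measure ℝ} {c : ℝ → ℝ} {K : ℝ≥0} {b : ℝ}

lemma abs_comp_min_sub_comp_min_le (hc : LipschitzOnWith K c (Iic b)) {s t : ℝ}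
    (hs : s ≤ b) (ht : t ≤ b) (y : ℝ) :
    |c (min s y) - c (min t y)| ≤ K * |s - t| := by
  have hmin : |min s y - min t y| ≤ |s - t| := by
    simpa using abs_min_sub_min_le_max s y t y
  calc |c (min s y) - c (min t y)| ≤ K * |min s y - min t y| :=
        hc.dist_le_mul _ ((min_le_left s y).trans hs) _ ((min_le_left t y).trans ht)
    _ ≤ K * |s - t| := by gcongr

lemma continuous_comp_min (hc : LipschitzOnWith K c (Iic b)) {t : ℝ} (ht : t ≤ b) :
    Continuous fun y => c (min t y) :=
  hc.continuousOn.comp_continuous (continuous_const.min continuous_id)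
    fun y => (min_le_left t y).trans ht

lemma hasDerivWithinAt_comp_min_Ioi {x c' : ℝ} (hc : HasDerivAt c c' x) (y : ℝ) :
    HasDerivWithinAt (fun t => c (min t y)) ((Ioi x).indicator (fun _ => c') y) (Ioi x) x := by
  rcases lt_or_ge x y with hxy | hyx
  · rw [indicator_of_mem (show y ∈ Ioi x from hxy)]
    refine (hc.congr_of_eventuallyEq ?_).hasDerivWithinAt
    filter_upwards [eventually_le_nhds hxy] with t ht using by rw [min_eq_left ht]
  · rw [indicator_of_notMem (show y ∉ Ioi x from hyx.not_gt)]
    exact (hasDerivWithinAt_const x _ (c y)).congr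
      (fun t ht => by rw [min_eq_right (hyx.trans (le_of_lt ht))]) (by rw [min_eq_right hyx])

lemma hasDerivWithinAt_comp_min_Iio {x c' : ℝ} (hc : HasDerivAt c c' x) (y : ℝ) :
    HasDerivWithinAt (fun t => c (min t y)) ((Ici x).indicator (fun _ => c') y) (Iio x) x := by
  rcases le_or_gt x y with hxy | hyx
  · rw [indicator_of_mem (show y ∈ Ici x from hxy)]
    exact hc.hasDerivWithinAt.congr (fun t ht => by rw [min_eq_left ((le_of_lt ht).trans hxy)])
      (by rw [min_eq_left hxy])
  · rw [indicator_of_notMem (show y ∉ Ici x from hyx.not_ge)]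
    refine ((hasDerivAt_const x (c y)).congr_of_eventuallyEq ?_).hasDerivWithinAt
    filter_upwards [eventually_ge_nhds hyx] with t ht using by rw [min_eq_right ht]

variable [IsFiniteMeasure μ]

lemma MeasureTheory.Integrable.comp_min_of_lipschitzOnWith {s t : ℝ}
    (hint : Integrable (fun y => c (min s y)) μ) (hc : LipschitzOnWith K c (Iic b))
    (hs : s ≤ b) (ht : t ≤ b) :
    Integrable (fun y => c (min t y)) μ := by
  refine (hint.norm.add (integrable_const (K * |t - s|))).mono'
    (continuous_comp_min hc ht).aestronglyMeasurable (ae_of_all _ fun y => ?_)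
  have := abs_comp_min_sub_comp_min_le hc ht hs y
  simp only [Pi.add_apply, Real.norm_eq_abs]
  linarith [abs_sub_abs_le_abs_sub (c (min t y)) (c (min s y))]

-- Dominated convergence: the difference quotients of the integrand are bounded by the
-- Lipschitz constant of `c`.
lemma hasDerivWithinAt_integral_comp_min {s : Set ℝ} {x : ℝ} {φ : ℝ → ℝ} (hxs : x ∉ s)
    (hc : LipschitzOnWith K c (Iic b)) (hxb : x < b)
    (hint : Integrable (fun y => c (min x y)) μ)
    (hφ : ∀ y, HasDerivWithinAt (fun t => c (min t y)) (φ y) s x) :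
    HasDerivWithinAt (fun t => ∫ y, c (min t y) ∂μ) (∫ y, φ y ∂μ) s x := by
  rw [hasDerivWithinAt_iff_tendsto_slope' hxs]
  have hb : ∀ᶠ t in 𝓝[s] x, t ≤ b := nhdsWithin_le_nhds (eventually_le_nhds hxb)
  have hint_t : ∀ {t}, t ≤ b → Integrable (fun y => c (min t y)) μ :=
    fun ht => hint.comp_min_of_lipschitzOnWith hc hxb.le ht
  have hslope : ∀ {t}, t ≤ b →
      slope (fun t => ∫ y, c (min t y) ∂μ) x t = ∫ y, slope (fun t => c (min t y)) x t ∂μ :=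
    fun ht => by simp only [slope_def_module, integral_smul, integral_sub (hint_t ht) hint]
  refine Tendsto.congr' (hb.mono fun t ht => (hslope ht).symm) ?_
  refine tendsto_integral_filter_of_dominated_convergence (fun _ => (K : ℝ)) ?_ ?_
    (integrable_const _) (ae_of_all _ fun y => (hasDerivWithinAt_iff_tendsto_slope' hxs).1 (hφ y))
  · filter_upwards [hb] with t ht
    simp only [slope_def_module]
    exact (((hint_t ht).sub hint).const_mul (t - x)⁻¹).aestronglyMeasurable
  · filter_upwards [hb] with t ht
    refine ae_of_all _ fun y => ?_
    rcases eq_or_ne t x with rfl | htx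
    · simp
    rw [slope_def_field, Real.norm_eq_abs, abs_div,
      div_le_iff₀ (abs_pos.2 (sub_ne_zero.2 htx))]
    exact abs_comp_min_sub_comp_min_le hc ht hxb.le y

lemma hasDerivWithinAt_integral_comp_min_Ioi {x c' : ℝ} (hc' : HasDerivAt c c' x)
    (hc : LipschitzOnWith K c (Iic b)) (hxb : x < b)
    (hint : Integrable (fun y => c (min x y)) μ) :
    HasDerivWithinAt (fun t => ∫ y, c (min t y) ∂μ) (μ.real (Ioi x) * c') (Ioi x) x := by
  simpa only [integral_indicator_const _ measurableSet_Ioi, smul_eq_mul] using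
    hasDerivWithinAt_integral_comp_min self_notMem_Ioi hc hxb hint
      (hasDerivWithinAt_comp_min_Ioi hc')

lemma hasDerivWithinAt_integral_comp_min_Iio {x c' : ℝ} (hc' : HasDerivAt c c' x)
    (hc : LipschitzOnWith K c (Iic b)) (hxb : x < b)
    (hint : Integrable (fun y => c (min x y)) μ) :
    HasDerivWithinAt (fun t => ∫ y, c (min t y) ∂μ) (μ.real (Ici x) * c') (Iio x) x := by
  simpa only [integral_indicator_const _ measurableSet_Ici, smul_eq_mul] using
    hasDerivWithinAt_integral_comp_min self_notMem_Iio hc hxb hint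
      (hasDerivWithinAt_comp_min_Iio hc')

end IntegralCompMin

noncomputable def martinKernelProfile (q θ y : ℝ) : ℝ :=
  1 + 1 / q * Real.exp (θ * y) * Real.sinh (θ * y)

lemma exp_neg_mul_martinKernelProfile (q θ x : ℝ) :
    Real.exp (-θ * x) * martinKernelProfile q θ x =
      1 / q * Real.sinh (θ * x) + Real.exp (-θ * x) := by
  have h : Real.exp (-θ * x) * Real.exp (θ * x) = 1 := by rw [← Real.exp_add]; simp
  unfold martinKernelProfile
  linear_combination (1 / q * Real.sinh (θ * x)) * h

lemma martinKernel0_self {n : ℕ} (p : Fin n → ℝ) (θ x y : ℝ) (i : Fin n) :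
    martinKernel0 n p θ x i y i = Real.exp (-θ * x) * martinKernelProfile (p i) θ (min x y) := by
  rcases le_or_gt x y with hxy | hyx
  · rw [martinKernel0, if_pos rfl, if_pos hxy, min_eq_left hxy, exp_neg_mul_martinKernelProfile]
  · rw [martinKernel0, if_pos rfl, if_neg hyx.not_ge, min_eq_right hyx.le, martinKernelProfile]

lemma martinKernel0Inf_self {n : ℕ} (p : Fin n → ℝ) (θ x : ℝ) (i : Fin n) :
    martinKernel0Inf n p θ x i i = Real.exp (-θ * x) * martinKernelProfile (p i) θ x := by
  rw [martinKernel0Inf, if_pos rfl, exp_neg_mul_martinKernelProfile]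

lemma hasDerivAt_martinKernelProfile (q θ y : ℝ) :
    HasDerivAt (martinKernelProfile q θ) (θ / q * Real.exp (2 * θ * y)) y := by
  have hlin : HasDerivAt (fun t => θ * t) θ y := by simpa using (hasDerivAt_id y).const_mul θ
  refine ((((hlin.exp).const_mul (1 / q)).mul hlin.sinh).const_add 1).congr_deriv ?_
  rw [show 2 * θ * y = θ * y + θ * y by ring, Real.exp_add, ← Real.cosh_add_sinh]
  ring

lemma lipschitzOnWith_martinKernelProfile (q : ℝ) {θ : ℝ} (hθ : 0 ≤ θ) (b : ℝ) :
    LipschitzOnWith ‖θ / q * Real.exp (2 * θ * b)‖₊ (martinKernelProfile q θ) (Iic b) := by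
  refine (convex_Iic b).lipschitzOnWith_of_nnnorm_hasDerivWithin_le
    (fun y _ => (hasDerivAt_martinKernelProfile q θ y).hasDerivWithinAt) fun y hy => ?_
  rw [← NNReal.coe_le_coe, coe_nnnorm, coe_nnnorm, Real.norm_eq_abs, Real.norm_eq_abs,
    abs_mul, abs_mul, Real.abs_exp, Real.abs_exp]
  gcongr
  exact hy

lemma sum_martinKernel0_eq {n : ℕ} (p : Fin n → ℝ) (θ : ℝ) (σ : Fin n → Measure ℝ)
    [∀ k, IsFiniteMeasure (σ k)] (a : Fin n → ℝ) (t : ℝ) (i : Fin n) :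
    ∑ k, ((∫ y in Ioi (0:ℝ), martinKernel0 n p θ t i y k ∂(σ k)) +
        a k * martinKernel0Inf n p θ t i k) =
      Real.exp (-θ * t) * (a i * martinKernelProfile (p i) θ t +
        (∫ y in Ioi (0:ℝ), martinKernelProfile (p i) θ (min t y) ∂(σ i)) +
        ∑ k ∈ Finset.univ.erase i, ((σ k (Ioi 0)).toReal + a k)) := by
  have hother : ∀ k ∈ Finset.univ.erase i,
      (∫ y in Ioi (0:ℝ), martinKernel0 n p θ t i y k ∂(σ k)) + a k * martinKernel0Inf n p θ t i k =
        Real.exp (-θ * t) * ((σ k (Ioi 0)).toReal + a k) := fun k hk => by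
    have hik : i ≠ k := (Finset.ne_of_mem_erase hk).symm
    simp only [martinKernel0, martinKernel0Inf, if_neg hik, setIntegral_const, smul_eq_mul,
      measureReal_def]
    ring
  rw [← Finset.add_sum_erase _ _ (Finset.mem_univ i), Finset.sum_congr rfl hother,
    ← Finset.mul_sum]
  simp only [martinKernel0_self, martinKernel0Inf_self, integral_const_mul]
  ring

lemma measureReal_Ici_eq_singleton_add_Ioi {α : Type*} [MeasurableSpace α] [TopologicalSpace α]
    [LinearOrder α] [OrderClosedTopology α] [OpensMeasurableSpace α]
    (μ : Measure α) [IsFiniteMeasure μ] (x : α) :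
    μ.real (Ici x) = μ.real {x} + μ.real (Ioi x) := by
  rw [← Ioi_insert, insert_eq,
    measureReal_union (disjoint_singleton_left.2 self_notMem_Ioi) measurableSet_Ioi]

theorem stmt_10_general (n : ℕ) (p : Fin n → ℝ)
    (hp : ∀ i, 0 < p i)
    (r : ℝ) (θ : ℝ) (hθ : θ = Real.sqrt (2 * r))
    (σ : Fin n → Measure ℝ) [∀ k, IsFiniteMeasure (σ k)]
    (a : Fin n → ℝ) (s₀ : ℝ)
    (f : ℝ → Fin n → ℝ)
    (hf : ∀ x i, f x i = s₀ * Real.exp (-θ * x) +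
      ∑ k, ((∫ y in Set.Ioi (0:ℝ), martinKernel0 n p θ x i y k ∂(σ k)) +
        a k * martinKernel0Inf n p θ x i k)) :
    ∀ x > (0:ℝ), ∀ i, ∃ dplus dminus : ℝ,
      Tendsto (fun δ => (f (x + δ) i - f x i) / δ) (𝓝[>] 0) (𝓝 dplus) ∧
      Tendsto (fun δ => (f x i - f (x - δ) i) / δ) (𝓝[>] 0) (𝓝 dminus) ∧
      dplus - dminus = -(θ / p i) * Real.exp (θ * x) * (σ i {x}).toReal ∧
      dplus - dminus ≤ 0 ∧
      (σ i {x} = 0 → HasDerivAt (fun t => f t i) dplus x) := by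
  intro x hx i
  set c := martinKernelProfile (p i) θ
  set c' := θ / p i * Real.exp (2 * θ * x)
  set μ := (σ i).restrict (Ioi 0)
  set S := s₀ + ∑ k ∈ Finset.univ.erase i, ((σ k (Ioi 0)).toReal + a k)
  set H : ℝ → ℝ := fun t => a i * c t + ∫ y, c (min t y) ∂μ + S
  have hfH : ∀ t, f t i = Real.exp (-θ * t) * H t := fun t => by
    rw [hf, sum_martinKernel0_eq]
    ring
  have hB : HasDerivAt (fun t => Real.exp (-θ * t)) (Real.exp (-θ * x) * -θ) x := by
    simpa using ((hasDerivAt_id x).const_mul (-θ)).exp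
  have hc' : HasDerivAt c c' x := hasDerivAt_martinKernelProfile (p i) θ x
  have hθ0 : 0 ≤ θ := hθ ▸ Real.sqrt_nonneg _
  have hc := lipschitzOnWith_martinKernelProfile (p i) hθ0 (x + 1)
  have hint : Integrable (fun y => c (min x y)) μ := by
    have hint0 : Integrable (fun y => c (min 0 y)) μ :=
      (integrable_const (c 0)).congr <| (ae_restrict_mem measurableSet_Ioi).mono
        fun y hy => show c 0 = c (min 0 y) by rw [min_eq_left (le_of_lt hy)]
    exact hint0.comp_min_of_lipschitzOnWith hc (by linarith) (by linarith)
  have hH_gt : HasDerivWithinAt H (a i * c' + μ.real (Ioi x) * c') (Ioi x) x :=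
    ((hc'.hasDerivWithinAt.const_mul (a i)).add
      (hasDerivWithinAt_integral_comp_min_Ioi hc' hc (lt_add_one x) hint)).add_const S
  have hH_lt : HasDerivWithinAt H (a i * c' + μ.real (Ici x) * c') (Iio x) x :=
    ((hc'.hasDerivWithinAt.const_mul (a i)).add
      (hasDerivWithinAt_integral_comp_min_Iio hc' hc (lt_add_one x) hint)).add_const S
  simp only [hfH]
  have hatom : μ.real {x} = (σ i {x}).toReal := by
    rw [measureReal_restrict_apply (measurableSet_singleton x),
      singleton_inter_of_mem (show x ∈ Ioi 0 from hx), measureReal_def]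
  have hexp : Real.exp (-θ * x) * c' = θ / p i * Real.exp (θ * x) := by
    rw [mul_left_comm, ← Real.exp_add]; ring_nf
  have hjump :
      (Real.exp (-θ * x) * -θ * H x + Real.exp (-θ * x) * (a i * c' + μ.real (Ioi x) * c')) -
        (Real.exp (-θ * x) * -θ * H x + Real.exp (-θ * x) * (a i * c' + μ.real (Ici x) * c')) =
      -(θ / p i) * Real.exp (θ * x) * (σ i {x}).toReal := by
    rw [measureReal_Ici_eq_singleton_add_Ioi, hatom]
    linear_combination (-(σ i {x}).toReal) * hexp
  refine ⟨_, _, (hB.hasDerivWithinAt.mul hH_gt).tendsto_slope_Ioi,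
    (hB.hasDerivWithinAt.mul hH_lt).tendsto_slope_Iio, hjump, ?_, fun h0 => ?_⟩
  · rw [hjump, neg_mul, neg_mul, neg_nonpos]
    exact mul_nonneg (mul_nonneg (div_nonneg hθ0 (hp i).le) (Real.exp_pos _).le)
      ENNReal.toReal_nonneg
  · rw [measureReal_Ici_eq_singleton_add_Ioi, hatom, h0, ENNReal.toReal_zero, zero_add] at hH_lt
    exact hB.mul (hH_lt.hasDerivAt_of_Iio_of_Ioi hH_gt)

/-- for a function `f` represented by a representing datum
`(σ_1,…,σ_n, a_1,…,a_n, s₀)`, both one-sided derivatives exist at every `x > 0` on every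
leg `i`, and `f⁺(x,i) − f⁻(x,i) = −(θ/p_i)·e^{θx}·σ_i({x}) ≤ 0`; in particular `f(·,i)` is
differentiable at `x` whenever `σ_i` has no atom at `x`. -/
theorem stmt_10 (n : ℕ) (hn : 1 ≤ n) (p : Fin n → ℝ)
    (hp : ∀ i, 0 < p i) (hpsum : ∑ i, p i = 1)
    (r : ℝ) (hr : 0 < r) (θ : ℝ) (hθ : θ = Real.sqrt (2 * r))
    (σ : Fin n → Measure ℝ) [∀ k, IsFiniteMeasure (σ k)]
    (hσsupp : ∀ k, σ k (Set.Iic 0) = 0)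
    (a : Fin n → ℝ) (ha : ∀ k, 0 ≤ a k) (s₀ : ℝ) (hs₀ : 0 ≤ s₀)
    (hnorm : s₀ + ∑ k, ((σ k (Set.Ioi 0)).toReal + a k) = 1)
    (f : ℝ → Fin n → ℝ)
    (hf : ∀ x i, f x i = s₀ * Real.exp (-θ * x) +
      ∑ k, ((∫ y in Set.Ioi (0:ℝ), martinKernel0 n p θ x i y k ∂(σ k)) +
        a k * martinKernel0Inf n p θ x i k)) :
    ∀ x > (0:ℝ), ∀ i, ∃ dplus dminus : ℝ,
      Tendsto (fun δ => (f (x + δ) i - f x i) / δ) (𝓝[>] 0) (𝓝 dplus) ∧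
      Tendsto (fun δ => (f x i - f (x - δ) i) / δ) (𝓝[>] 0) (𝓝 dminus) ∧
      dplus - dminus = -(θ / p i) * Real.exp (θ * x) * (σ i {x}).toReal ∧
      dplus - dminus ≤ 0 ∧
      (σ i {x} = 0 → HasDerivAt (fun t => f t i) dplus x) :=
  stmt_10_general n p hp r θ hθ σ a s₀ f hf
end

section
/- Let f be the function represented by a representing datum normalized at (x₀,i₀). Then for every x ≥ x₀ the right derivative f⁺(x,i₀) exists and τ_{i₀}((x,∞)) + b_{i₀} = p_{i₀} · ψ̃(x₀,i₀) · e^{−θx} · ( f⁺(x,i₀) + θ·f(x,i₀) ). -/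
open Filter Topology MeasureTheory

/-- The minimal harmonic function `N_k(x,i)` of the Brownian spider attached to the
boundary point `(∞,k)`. -/
noncomputable def spiderN (n : ℕ) (p : Fin n → ℝ) (θ : ℝ) (x : ℝ) (i k : Fin n) : ℝ :=
  if i = k then (1 / p i) * Real.sinh (θ * x) + Real.exp (-θ * x)
  else Real.exp (-θ * x)

/-- The function `ψ̃(x,i) = (1/θ)((1/p_i)·sinh(θx) + e^{−θx})`. -/
noncomputable def spiderPsiT (n : ℕ) (p : Fin n → ℝ) (θ : ℝ) (x : ℝ) (i : Fin n) : ℝ :=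
  (1/θ) * ((1 / p i) * Real.sinh (θ * x) + Real.exp (-θ * x))

/-!
For `u ≥ x₀` every kernel of the representation, read as a function of the position `(u, i₀)`,
is `e^{-θu}` times a function of `min u y`: a constant for the origin and for the other legs,
and `h (min u y)` on the leg `i₀`, where `h = martinProfile` is `e^{θz} φ(z) / φ(x₀)` for `z ≥ x₀`
(constant for `z ≤ x₀`), `φ = θ ψ̃(·, i₀)`, and `y = ∞` for the boundary point `(∞, i₀)`. Hence
`f(u, i₀) = e^{-θu} M(u)` with `M(u) = c + ∫ h (min u y) dτ_{i₀} + b_{i₀} h(u)`.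
By dominated convergence `M` has right derivative `h'(x) (τ_{i₀}((x,∞)) + b_{i₀})` at `x ≥ x₀`,
so `f⁺ + θ f = e^{-θx} M'₊`, and `h'(x) = θ e^{2θx} / (p_{i₀} φ(x₀))` turns this into the claim.
-/

open Set Real

theorem HasDerivWithinAt.tendsto_slope_zero_right {f : ℝ → ℝ} {f' x : ℝ}
    (hf : HasDerivWithinAt f f' (Ici x) x) :
    Tendsto (fun δ => (f (x + δ) - f x) / δ) (𝓝[>] 0) (𝓝 f') := by
  rw [← hasDerivWithinAt_Ioi_iff_Ici,
    hasDerivWithinAt_iff_tendsto_slope' (s := Ioi x) (lt_irrefl x)] at hf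
  have hshift : Tendsto (fun δ : ℝ => x + δ) (𝓝[>] 0) (𝓝[>] x) := by
    refine tendsto_nhdsWithin_iff.2 ⟨?_, eventually_nhdsWithin_of_forall fun δ hδ => ?_⟩
    · simpa using (continuous_const_add x).continuousWithinAt.tendsto (s := Ioi 0) (x := 0)
    · simpa using hδ
  refine (hf.comp hshift).congr fun δ => ?_
  simp [slope_def_field, div_eq_inv_mul]

theorem hasDerivWithinAt_integral_comp_min_s11 {μ : Measure ℝ} [IsFiniteMeasure μ] {h : ℝ → ℝ}
    {h' x : ℝ} (hh : HasDerivWithinAt h h' (Ici x) x)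
    (hint : ∀ u, Integrable (fun y => h (min u y)) μ) :
    HasDerivWithinAt (fun u => ∫ y, h (min u y) ∂μ) (μ.real (Ioi x) * h') (Ici x) x := by
  rw [← hasDerivWithinAt_Ioi_iff_Ici,
    hasDerivWithinAt_iff_tendsto_slope' (s := Ioi x) (lt_irrefl x)] at hh ⊢
  obtain ⟨c, hxc, hbound⟩ := mem_nhdsGT_iff_exists_Ioo_subset.1
    (hh.norm.eventually (eventually_le_nhds (lt_add_one ‖h'‖)))
  have hslope : slope (fun u => ∫ y, h (min u y) ∂μ) x
      = fun u => ∫ y, (h (min u y) - h (min x y)) / (u - x) ∂μ := by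
    ext u
    rw [integral_div, integral_sub (hint u) (hint x), slope_def_field]
  rw [hslope, ← smul_eq_mul, ← integral_indicator_const _ measurableSet_Ioi]
  -- Dominated convergence: the difference quotients in `y` are bounded by `‖h'‖ + 1`
  -- and tend to `h'` for `y > x` and to `0` for `y ≤ x`.
  refine tendsto_integral_filter_of_dominated_convergence (fun _ => ‖h'‖ + 1)
    (Eventually.of_forall fun u => (((hint u).sub (hint x)).div_const _).aestronglyMeasurable)
    ?_ (integrable_const _) (Eventually.of_forall fun y => ?_)
  · filter_upwards [Ioo_mem_nhdsGT hxc] with u hu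
    refine Eventually.of_forall fun y => ?_
    rcases le_or_gt y x with hyx | hxy
    · simp only [min_eq_right hyx, min_eq_right (hyx.trans hu.1.le), sub_self, zero_div,
        norm_zero]
      positivity
    · have hv : min u y ∈ Ioo x c := ⟨lt_min hu.1 hxy, (min_le_left u y).trans_lt hu.2⟩
      have hslope_v : ‖slope h x (min u y)‖ ≤ ‖h'‖ + 1 := hbound hv
      rw [slope_def_field] at hslope_v
      rw [min_eq_left hxy.le]
      refine le_trans ?_ hslope_v
      rw [norm_div, norm_div]
      gcongr
      · exact norm_pos_iff.2 (sub_pos.2 hv.1).ne'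
      · rw [Real.norm_of_nonneg (sub_pos.2 hv.1).le, Real.norm_of_nonneg (sub_pos.2 hu.1).le]
        exact sub_le_sub_right (min_le_left u y) x
  · rcases le_or_gt y x with hyx | hxy
    · refine tendsto_const_nhds.congr' ?_
      filter_upwards [self_mem_nhdsWithin] with u hu
      simp [min_eq_right hyx, min_eq_right (hyx.trans (le_of_lt hu)), notMem_Ioi.2 hyx]
    · rw [indicator_of_mem (mem_Ioi.2 hxy)]
      refine hh.congr' ?_
      filter_upwards [Ioo_mem_nhdsGT hxy] with u hu
      rw [min_eq_left hu.2.le, min_eq_left hxy.le, slope_def_field]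

lemma integrable_comp_min_restrict_Ioi {μ : Measure ℝ} [IsFiniteMeasure μ] {h : ℝ → ℝ}
    (hh : Continuous h) (a u : ℝ) : Integrable (fun y => h (min u y)) (μ.restrict (Ioi a)) := by
  obtain ⟨C, hC⟩ := (isCompact_Icc (a := min a u) (b := u)).exists_bound_of_continuousOn
    hh.continuousOn
  refine Integrable.of_bound (by fun_prop) C (ae_restrict_of_forall_mem measurableSet_Ioi
    fun y hy => hC _ ⟨le_min (min_le_right a u) ((min_le_left a u).trans hy.le), min_le_left u y⟩)

-- `legPhi (p i) θ = N_i(·, i) = θ ψ̃(·, i)`.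
noncomputable def legPhi (q θ z : ℝ) : ℝ := 1 / q * sinh (θ * z) + exp (-θ * z)

noncomputable def martinProfile (q θ x₀ z : ℝ) : ℝ :=
  exp (θ * max x₀ z) * legPhi q θ (max x₀ z) / legPhi q θ x₀

section legPhi

variable {q θ : ℝ}

lemma legPhi_pos (hq : 0 < q) (hθ : 0 < θ) {z : ℝ} (hz : 0 ≤ z) : 0 < legPhi q θ z := by
  unfold legPhi
  have : 0 ≤ sinh (θ * z) := sinh_nonneg_iff.2 (by positivity)
  positivity

lemma hasDerivAt_exp_mul_legPhi (z : ℝ) :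
    HasDerivAt (fun z => exp (θ * z) * legPhi q θ z) (θ / q * exp (θ * z) ^ 2) z := by
  have hlin : ∀ c : ℝ, HasDerivAt (fun z : ℝ => c * z) c z := fun c => by
    simpa using (hasDerivAt_id z).const_mul c
  refine (((hlin θ).exp.mul (((hlin θ).sinh.const_mul (1 / q)).add (hlin (-θ)).exp) :
    HasDerivAt (fun z => exp (θ * z) * legPhi q θ z) _ z)).congr_deriv ?_
  have hcs : cosh (θ * z) = exp (θ * z) - sinh (θ * z) := by rw [← cosh_add_sinh]; ring
  simp only [legPhi, hcs]
  ring

lemma continuous_martinProfile (x₀ : ℝ) : Continuous (martinProfile q θ x₀) := by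
  unfold martinProfile legPhi; fun_prop

lemma hasDerivWithinAt_martinProfile {x₀ x : ℝ} (hx : x₀ ≤ x) :
    HasDerivWithinAt (martinProfile q θ x₀) (θ / q * exp (θ * x) ^ 2 / legPhi q θ x₀) (Ici x) x :=
  ((hasDerivAt_exp_mul_legPhi x).div_const _).hasDerivWithinAt.congr_of_mem
    (fun z hz => by simp only [martinProfile, max_eq_right (hx.trans hz)]) self_mem_Ici

end legPhi

section kernels

variable {n : ℕ} {p : Fin n → ℝ} {θ x₀ u y : ℝ} {i k : Fin n}

lemma spiderN_self (z : ℝ) (i : Fin n) : spiderN n p θ z i i = legPhi (p i) θ z := if_pos rfl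

lemma spiderPsiT_eq (z : ℝ) (i : Fin n) : spiderPsiT n p θ z i = 1 / θ * legPhi (p i) θ z := rfl

lemma spiderGreen_self (u y : ℝ) (i : Fin n) :
    spiderGreen n p θ u i y i = 1 / θ * exp (-θ * max u y) * legPhi (p i) θ (min u y) := if_pos rfl

lemma spiderGreen_div_of_ne (hθ : θ ≠ 0) (hik : i ≠ k) :
    spiderGreen n p θ u i y k / spiderGreen n p θ x₀ i y k = exp (-θ * u) * exp (θ * x₀) := by
  simp only [spiderGreen, if_neg hik, neg_mul, exp_neg]
  field_simp

lemma spiderN_div_of_ne (hik : i ≠ k) :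
    spiderN n p θ u i k / spiderN n p θ x₀ i k = exp (-θ * u) * exp (θ * x₀) := by
  simp only [spiderN, if_neg hik, neg_mul, exp_neg]
  field_simp

lemma spiderN_div_self (hu : x₀ ≤ u) :
    spiderN n p θ u i i / spiderN n p θ x₀ i i = exp (-θ * u) * martinProfile (p i) θ x₀ u := by
  rw [spiderN_self, spiderN_self, martinProfile, max_eq_right hu, neg_mul, exp_neg]
  field_simp

lemma spiderGreen_div_self (hp : 0 < p i) (hθ : 0 < θ) (hx₀ : 0 < x₀) (hu : x₀ ≤ u) (hy : 0 < y) :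
    spiderGreen n p θ u i y i / spiderGreen n p θ x₀ i y i
      = exp (-θ * u) * martinProfile (p i) θ x₀ (min u y) := by
  have hφ : ∀ z, 0 ≤ z → legPhi (p i) θ z ≠ 0 := fun z hz => (legPhi_pos hp hθ hz).ne'
  rw [spiderGreen_self, spiderGreen_self, martinProfile]
  rcases le_total y x₀ with hyx₀ | hx₀y
  · simp only [max_eq_left (hyx₀.trans hu), min_eq_right (hyx₀.trans hu), max_eq_left hyx₀,
      min_eq_right hyx₀, neg_mul, exp_neg]
    field_simp [hφ y hy.le, hφ x₀ hx₀.le]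
  rcases le_total y u with hyu | huy
  · simp only [max_eq_left hyu, min_eq_right hyu, max_eq_right hx₀y, min_eq_left hx₀y, neg_mul,
      exp_neg]
    field_simp [hφ x₀ hx₀.le]
  · simp only [max_eq_right huy, min_eq_left huy, max_eq_right hx₀y, min_eq_left hx₀y,
      max_eq_right hu, neg_mul, exp_neg]
    field_simp [hφ x₀ hx₀.le]

end kernels

noncomputable def spiderRepresented (n : ℕ) (p : Fin n → ℝ) (θ x₀ : ℝ) (i₀ : Fin n)
    (τ : Fin n → Measure ℝ) (b : Fin n → ℝ) (t₀ : ℝ) (x : ℝ) (i : Fin n) : ℝ :=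
  t₀ * Real.exp (-θ * (x - x₀)) +
    ∑ k, ((∫ y in Set.Ioi (0:ℝ),
        spiderGreen n p θ x i y k / spiderGreen n p θ x₀ i₀ y k ∂(τ k)) +
      b k * (spiderN n p θ x i k / spiderN n p θ x₀ i₀ k))

section represented

variable {n : ℕ} {p : Fin n → ℝ} {θ x₀ : ℝ} {i₀ : Fin n} {τ : Fin n → Measure ℝ} {b : Fin n → ℝ}
  {t₀ : ℝ}

lemma spiderRepresented_eq (hp : 0 < p i₀) (hθ : 0 < θ) (hx₀ : 0 < x₀) {u : ℝ} (hu : x₀ ≤ u) :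
    spiderRepresented n p θ x₀ i₀ τ b t₀ u i₀ = exp (-θ * u) *
      (exp (θ * x₀) * (t₀ + ∑ k ∈ Finset.univ.erase i₀, ((τ k).real (Ioi 0) + b k))
        + ∫ y in Ioi 0, martinProfile (p i₀) θ x₀ (min u y) ∂τ i₀
        + b i₀ * martinProfile (p i₀) θ x₀ u) := by
  have hother : ∀ k ∈ Finset.univ.erase i₀,
      (∫ y in Ioi 0, spiderGreen n p θ u i₀ y k / spiderGreen n p θ x₀ i₀ y k ∂τ k)
        + b k * (spiderN n p θ u i₀ k / spiderN n p θ x₀ i₀ k)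
      = exp (-θ * u) * (exp (θ * x₀) * ((τ k).real (Ioi 0) + b k)) := fun k hk => by
    have hik := (Finset.ne_of_mem_erase hk).symm
    simp only [spiderGreen_div_of_ne hθ.ne' hik, spiderN_div_of_ne hik, setIntegral_const,
      smul_eq_mul]
    ring
  have hshift : exp (-θ * (u - x₀)) = exp (-θ * u) * exp (θ * x₀) := by
    rw [← exp_add]; ring_nf
  rw [spiderRepresented, ← Finset.add_sum_erase _ _ (Finset.mem_univ i₀),
    Finset.sum_congr rfl hother,
    setIntegral_congr_fun measurableSet_Ioi fun y hy => spiderGreen_div_self hp hθ hx₀ hu hy,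
    integral_const_mul, spiderN_div_self hu, hshift, ← Finset.mul_sum, ← Finset.mul_sum]
  ring

lemma hasDerivWithinAt_spiderRepresented [∀ k, IsFiniteMeasure (τ k)] (hp : 0 < p i₀)
    (hθ : 0 < θ) (hx₀ : 0 < x₀) {x : ℝ} (hx : x₀ ≤ x) :
    HasDerivWithinAt (fun u => spiderRepresented n p θ x₀ i₀ τ b t₀ u i₀)
      (-θ * spiderRepresented n p θ x₀ i₀ τ b t₀ x i₀ + exp (-θ * x) *
        (((τ i₀).real (Ioi x) + b i₀) * (θ / p i₀ * exp (θ * x) ^ 2 / legPhi (p i₀) θ x₀)))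
      (Ici x) x := by
  have hh := hasDerivWithinAt_martinProfile (q := p i₀) (θ := θ) hx
  have hint := hasDerivWithinAt_integral_comp_min_s11 (μ := (τ i₀).restrict (Ioi 0)) hh
    (integrable_comp_min_restrict_Ioi (continuous_martinProfile x₀) 0)
  rw [measureReal_restrict_apply measurableSet_Ioi, Ioi_inter_Ioi,
    max_eq_left (hx₀.trans_le hx).le] at hint
  have hM := (hint.const_add (exp (θ * x₀) *
    (t₀ + ∑ k ∈ Finset.univ.erase i₀, ((τ k).real (Ioi 0) + b k)))).add (hh.const_mul (b i₀))
  have hexp : HasDerivAt (fun u => exp (-θ * u)) (exp (-θ * x) * -θ) x := by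
    simpa using ((hasDerivAt_id x).const_mul (-θ)).exp
  refine ((hexp.hasDerivWithinAt.mul hM).congr_of_mem
    (fun u hu => spiderRepresented_eq hp hθ hx₀ (hx.trans hu)) self_mem_Ici).congr_deriv ?_
  rw [spiderRepresented_eq hp hθ hx₀ hx]
  simp only [Pi.add_apply]
  ring

end represented

theorem stmt_11_general (n : ℕ) (p : Fin n → ℝ)
    (hp : ∀ i, 0 < p i)
    (r : ℝ) (hr : 0 < r) (θ : ℝ) (hθ : θ = Real.sqrt (2 * r))
    (x₀ : ℝ) (hx₀ : 0 < x₀) (i₀ : Fin n)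
    (τ : Fin n → Measure ℝ) [∀ k, IsFiniteMeasure (τ k)]
    (b : Fin n → ℝ) (t₀ : ℝ)
    (f : ℝ → Fin n → ℝ)
    (hf : ∀ x i, f x i = t₀ * Real.exp (-θ * (x - x₀)) +
      ∑ k, ((∫ y in Set.Ioi (0:ℝ),
          spiderGreen n p θ x i y k / spiderGreen n p θ x₀ i₀ y k ∂(τ k)) +
        b k * (spiderN n p θ x i k / spiderN n p θ x₀ i₀ k))) :
    ∀ x, x₀ ≤ x → ∃ d : ℝ,
      Tendsto (fun δ => (f (x + δ) i₀ - f x i₀) / δ) (𝓝[>] 0) (𝓝 d) ∧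
      (τ i₀ (Set.Ioi x)).toReal + b i₀ =
        p i₀ * spiderPsiT n p θ x₀ i₀ * Real.exp (-θ * x) * (d + θ * f x i₀) := by
  intro x hx
  have hθ : 0 < θ := hθ ▸ Real.sqrt_pos.2 (by positivity)
  have hf : ∀ u, f u i₀ = spiderRepresented n p θ x₀ i₀ τ b t₀ u i₀ := fun u => hf u i₀
  simp only [hf]
  refine ⟨_, (hasDerivWithinAt_spiderRepresented (hp i₀) hθ hx₀ hx).tendsto_slope_zero_right, ?_⟩
  have hφ := (legPhi_pos (hp i₀) hθ hx₀.le).ne'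
  rw [← measureReal_def, spiderPsiT_eq, neg_mul, exp_neg]
  field_simp [(hp i₀).ne']
  ring

/-- for a function `f` represented by a representing datum normalized at
`(x₀,i₀)`, for every `x ≥ x₀` the right derivative `f⁺(x,i₀)` exists and
`τ_{i₀}((x,∞)) + b_{i₀} = p_{i₀}·ψ̃(x₀,i₀)·e^{−θx}·(f⁺(x,i₀) + θ·f(x,i₀))`. -/
theorem stmt_11 (n : ℕ) (hn : 1 ≤ n) (p : Fin n → ℝ)
    (hp : ∀ i, 0 < p i) (hpsum : ∑ i, p i = 1)
    (r : ℝ) (hr : 0 < r) (θ : ℝ) (hθ : θ = Real.sqrt (2 * r))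
    (x₀ : ℝ) (hx₀ : 0 < x₀) (i₀ : Fin n)
    (τ : Fin n → Measure ℝ) [∀ k, IsFiniteMeasure (τ k)]
    (hτsupp : ∀ k, τ k (Set.Iic 0) = 0)
    (b : Fin n → ℝ) (hb : ∀ k, 0 ≤ b k) (t₀ : ℝ) (ht₀ : 0 ≤ t₀)
    (hnorm : t₀ + ∑ k, ((τ k (Set.Ioi 0)).toReal + b k) = 1)
    (f : ℝ → Fin n → ℝ)
    (hf : ∀ x i, f x i = t₀ * Real.exp (-θ * (x - x₀)) +
      ∑ k, ((∫ y in Set.Ioi (0:ℝ),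
          spiderGreen n p θ x i y k / spiderGreen n p θ x₀ i₀ y k ∂(τ k)) +
        b k * (spiderN n p θ x i k / spiderN n p θ x₀ i₀ k))) :
    ∀ x, x₀ ≤ x → ∃ d : ℝ,
      Tendsto (fun δ => (f (x + δ) i₀ - f x i₀) / δ) (𝓝[>] 0) (𝓝 d) ∧
      (τ i₀ (Set.Ioi x)).toReal + b i₀ =
        p i₀ * spiderPsiT n p θ x₀ i₀ * Real.exp (-θ * x) * (d + θ * f x i₀) :=
  stmt_11_general n p hp r hr θ hθ x₀ hx₀ i₀ τ b t₀ f hf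
end

section
/- Fix n ≥ 1, weights p_k > 0 with Σ p_k = 1, constants A_k > 0, take r = 1/2 (so θ = 1), and let z : {1,…,n} → (0,∞). Then for each i the boundary equation Σ_{k=1}^n ∫₀^{z_k} g_{1/2}((z_i,i),(y,k)) · p_k · A_k · y dy = g_{1/2}((z_i,i),𝟎) · Σ_{k=1}^n p_k·A_k holds if and only if A_i·( z_i·cosh(z_i) − sinh(z_i) ) = Σ_{k=1}^n A_k·p_k·e^{−z_k}·(1 + z_k). -/
open Filter Topology MeasureTheory

/-- Green function of the Brownian spider between `(x,i)` and the origin `𝟎`. -/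
noncomputable def spiderGreenOrigin (θ x : ℝ) : ℝ := (1/θ) * Real.exp (-θ * x)

/-!
With `θ = 1`, the Green function from `(z_i, i)` to `(y, k)` with `y ≤ z_i` is
`e^{-z_i} e^{-y}`, plus `e^{-z_i} sinh y / p_i` when `k = i`. Integrating against
`p_k A_k y` with `∫₀^b y e^{-y} dy = 1 - e^{-b}(1 + b)` and `∫₀^b y sinh y dy = b cosh b - sinh b`,
every term carries the factor `e^{-z_i} = g((z_i,i), 𝟎)`; cancelling it, the `Σ p_k A_k` on both
sides cancel too and what remains is the stated equation.
-/

theorem integral_mul_exp_neg (b : ℝ) :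
    ∫ y in (0:ℝ)..b, y * Real.exp (-y) = 1 - Real.exp (-b) * (1 + b) := by
  have hderiv : ∀ y ∈ Set.uIcc (0:ℝ) b,
      HasDerivAt (fun t => -((1 + t) * Real.exp (-t))) (y * Real.exp (-y)) y := by
    intro y _
    have hexp : HasDerivAt (fun t : ℝ => Real.exp (-t)) (-Real.exp (-y)) y := by
      simpa using (hasDerivAt_neg y).exp
    exact (((hasDerivAt_id y).const_add 1).mul hexp).neg.congr_deriv (by simp only [id]; ring)
  rw [intervalIntegral.integral_eq_sub_of_hasDerivAt hderiv
    (Continuous.intervalIntegrable (by fun_prop) _ _)]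
  rw [neg_zero, Real.exp_zero]
  ring

theorem integral_mul_sinh (b : ℝ) :
    ∫ y in (0:ℝ)..b, y * Real.sinh y = b * Real.cosh b - Real.sinh b := by
  have hderiv : ∀ y ∈ Set.uIcc (0:ℝ) b,
      HasDerivAt (fun t => t * Real.cosh t - Real.sinh t) (y * Real.sinh y) y := by
    intro y _
    exact (((hasDerivAt_id y).mul (Real.hasDerivAt_cosh y)).sub
      (Real.hasDerivAt_sinh y)).congr_deriv (by simp)
  rw [intervalIntegral.integral_eq_sub_of_hasDerivAt hderiv
    (Continuous.intervalIntegrable (by fun_prop) _ _)]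
  simp

section SpiderGreen

variable {n : ℕ} {p : Fin n → ℝ} {i j : Fin n}

theorem spiderGreen_one_of_ne (hij : i ≠ j) (x y : ℝ) :
    spiderGreen n p 1 x i y j = Real.exp (-x) * Real.exp (-y) := by
  simp [spiderGreen, hij]

theorem spiderGreen_one_self_of_le {x y : ℝ} (hyx : y ≤ x) :
    spiderGreen n p 1 x i y i = Real.exp (-x) * (Real.sinh y / p i + Real.exp (-y)) := by
  simp [spiderGreen, max_eq_left hyx, min_eq_right hyx, div_eq_inv_mul]

theorem integral_spiderGreen_one_mul_of_ne (hij : i ≠ j) (x b c : ℝ) :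
    ∫ y in (0:ℝ)..b, spiderGreen n p 1 x i y j * (c * y) =
      Real.exp (-x) * (c * (1 - Real.exp (-b) * (1 + b))) := by
  simp_rw [spiderGreen_one_of_ne hij, show ∀ y, Real.exp (-x) * Real.exp (-y) * (c * y) =
    Real.exp (-x) * c * (y * Real.exp (-y)) from fun y ↦ by ring]
  rw [intervalIntegral.integral_const_mul, integral_mul_exp_neg]
  ring

theorem integral_spiderGreen_one_self_mul (hp : p i ≠ 0) {b : ℝ} (hb : 0 ≤ b) (a : ℝ) :
    ∫ y in (0:ℝ)..b, spiderGreen n p 1 b i y i * (p i * a * y) =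
      Real.exp (-b) * (p i * a * (1 - Real.exp (-b) * (1 + b)) +
        a * (b * Real.cosh b - Real.sinh b)) := by
  have hEq : Set.EqOn (fun y ↦ spiderGreen n p 1 b i y i * (p i * a * y))
      (fun y ↦ Real.exp (-b) * (p i * a) * (y * Real.exp (-y)) +
        Real.exp (-b) * a * (y * Real.sinh y)) (Set.uIcc 0 b) := by
    intro y hy
    rw [Set.uIcc_of_le hb] at hy
    simp only [spiderGreen_one_self_of_le hy.2]
    field_simp
    ring
  rw [intervalIntegral.integral_congr hEq, intervalIntegral.integral_add
    (Continuous.intervalIntegrable (by fun_prop) _ _)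
    (Continuous.intervalIntegrable (by fun_prop) _ _), intervalIntegral.integral_const_mul,
    intervalIntegral.integral_const_mul, integral_mul_exp_neg, integral_mul_sinh]
  ring

theorem integral_spiderGreen_one_mul (hp : p i ≠ 0) (z : Fin n → ℝ) (hz : 0 ≤ z i)
    (A : Fin n → ℝ) (k : Fin n) :
    ∫ y in (0:ℝ)..(z k), spiderGreen n p 1 (z i) i y k * (p k * A k * y) =
      Real.exp (-z i) * (p k * A k * (1 - Real.exp (-z k) * (1 + z k)) +
        if i = k then A i * (z i * Real.cosh (z i) - Real.sinh (z i)) else 0) := by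
  by_cases hik : i = k
  · subst hik
    simpa using integral_spiderGreen_one_self_mul hp hz (A i)
  · simp [integral_spiderGreen_one_mul_of_ne hik, hik]

end SpiderGreen

theorem stmt_18_general (n : ℕ) (p : Fin n → ℝ)
    (hp : ∀ k, 0 < p k)
    (A : Fin n → ℝ)
    (z : Fin n → ℝ) (hz : ∀ k, 0 < z k) (i : Fin n) :
    (∑ k, ∫ y in (0:ℝ)..(z k), spiderGreen n p 1 (z i) i y k * (p k * A k * y)) =
        spiderGreenOrigin 1 (z i) * ∑ k, p k * A k ↔
      A i * (z i * Real.cosh (z i) - Real.sinh (z i)) =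
        ∑ k, A k * p k * Real.exp (-z k) * (1 + z k) := by
  simp_rw [integral_spiderGreen_one_mul (hp i).ne' z (hz i).le A, ← Finset.mul_sum,
    Finset.sum_add_distrib, Finset.sum_ite_eq, Finset.mem_univ, if_true, spiderGreenOrigin,
    one_div_one, neg_one_mul, one_mul, mul_right_inj' (Real.exp_pos _).ne']
  have hsplit : ∑ k, p k * A k * (1 - Real.exp (-z k) * (1 + z k)) =
      ∑ k, p k * A k - ∑ k, A k * p k * Real.exp (-z k) * (1 + z k) := by
    rw [← Finset.sum_sub_distrib]
    exact Finset.sum_congr rfl fun k _ ↦ by ring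
  rw [hsplit]
  constructor <;> intro h <;> linarith

/-- with `r = 1/2` (so `θ = 1`), the boundary equation for the thresholds of
the stopping region of the reward `g(x,i) = A_i x` is equivalent to
`A_i(z_i cosh z_i − sinh z_i) = Σ_k A_k p_k e^{−z_k}(1 + z_k)`. -/
theorem stmt_18 (n : ℕ) (hn : 1 ≤ n) (p : Fin n → ℝ)
    (hp : ∀ k, 0 < p k) (hpsum : ∑ k, p k = 1)
    (A : Fin n → ℝ) (hA : ∀ k, 0 < A k)
    (z : Fin n → ℝ) (hz : ∀ k, 0 < z k) (i : Fin n) :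
    (∑ k, ∫ y in (0:ℝ)..(z k), spiderGreen n p 1 (z i) i y k * (p k * A k * y)) =
        spiderGreenOrigin 1 (z i) * ∑ k, p k * A k ↔
      A i * (z i * Real.cosh (z i) - Real.sinh (z i)) =
        ∑ k, A k * p k * Real.exp (-z k) * (1 + z k) :=
  stmt_18_general n p hp A z hz i
end
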